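/- Let D be a drawing style and b > 1, x = 1/(b−1). Suppose that for arbitrarily large n there exist n-vertex multigraphs in drawing style D with e = Θ(n^b) edges in which any two edges cross at most a constant number C of times. Then the crossing number of such a multigraph is O(n^{2b}), while e^{x+2}/n^{x+1} = Θ(n^{2b}); hence the lower bound cr(G) ≥ α·e^{x+2}/n^{x+1} of the Generalized Crossing Lemma is asymptotically tight for drawing style D. -/

import Mathlib

open Set

/-- A topological multigraph drawn in the plane: `n` vertices represented by distinct
points `vpos`, and `m` edges (no loops, parallel edges allowed), where edge `i` connects
the vertices `ends i` and is represented by the simple continuous arc `arc i` (parametrized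
over `[0,1]`).  The drawing is in general position: (a) no vertex is an interior point of
any edge; (b) any two edges intersect in finitely many points (and all common interior
points are proper crossings); (d) no three edges cross at a common point. -/
structure TopMultigraph where
  n : ℕ
  m : ℕ
  vpos : Fin n → ℝ × ℝ
  vinj : Function.Injective vpos
  ends : Fin m → Fin n × Fin n
  noLoop : ∀ i, (ends i).1 ≠ (ends i).2
  arc : Fin m → ℝ → ℝ × ℝ
  arc_cont : ∀ i, ContinuousOn (arc i) (Icc 0 1)
  arc_inj : ∀ i, InjOn (arc i) (Icc 0 1)
  arc_src : ∀ i, arc i 0 = vpos (ends i).1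
  arc_tgt : ∀ i, arc i 1 = vpos (ends i).2
  no_vertex_interior : ∀ i, ∀ t ∈ Ioo (0:ℝ) 1, ∀ v, arc i t ≠ vpos v
  finite_intersections : ∀ i j, i ≠ j →
    ((arc i '' Icc 0 1) ∩ (arc j '' Icc 0 1)).Finite
  no_triple : ∀ i j k, i ≠ j → j ≠ k → i ≠ k → ∀ p : ℝ × ℝ,
    ¬(p ∈ arc i '' Ioo 0 1 ∧ p ∈ arc j '' Ioo 0 1 ∧ p ∈ arc k '' Ioo 0 1)

namespace TopMultigraph

variable (G : TopMultigraph)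

/-- The (closed) point set of edge `i`. -/
def edgeCurve (i : Fin G.m) : Set (ℝ × ℝ) := G.arc i '' Icc 0 1

/-- The set of interior points of edge `i`. -/
def edgeInterior (i : Fin G.m) : Set (ℝ × ℝ) := G.arc i '' Ioo 0 1

/-- Two edges are parallel if they connect the same pair of vertices. -/
def Parallel (i j : Fin G.m) : Prop :=
  G.ends i = G.ends j ∨ G.ends i = ((G.ends j).2, (G.ends j).1)

/-- Two edges are adjacent if they share an endpoint. -/
def Adjacent (i j : Fin G.m) : Prop :=
  (G.ends i).1 = (G.ends j).1 ∨ (G.ends i).1 = (G.ends j).2 ∨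
  (G.ends i).2 = (G.ends j).1 ∨ (G.ends i).2 = (G.ends j).2

/-- Two distinct edges cross if they share an interior point (by general position,
every common interior point is a proper crossing). -/
def Crosses (i j : Fin G.m) : Prop :=
  i ≠ j ∧ (G.edgeInterior i ∩ G.edgeInterior j).Nonempty

/-- The set of crossing points of the drawing. -/
def crossingSet : Set (ℝ × ℝ) :=
  {p | ∃ i j : Fin G.m, i ≠ j ∧ p ∈ G.edgeInterior i ∧ p ∈ G.edgeInterior j}

/-- The crossing number: the number of crossing points of the drawing. -/
noncomputable def cr : ℕ := G.crossingSet.ncard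

/-- The drawing is crossing-free if no two edges cross. -/
def CrossingFree : Prop := G.crossingSet = ∅

/-- The degree of a vertex: the number of edges incident to it. -/
def degree (v : Fin G.n) : ℕ :=
  (Finset.univ.filter fun i => (G.ends i).1 = v ∨ (G.ends i).2 = v).card

/-- The maximum degree `Δ(G)`. -/
def maxDegree : ℕ := Finset.univ.sup G.degree

/-- A topological multigraph is separated if any pair of parallel edges forms a simple
closed curve (they meet exactly in their two common endpoints) having at least one vertex
in its interior and at least one vertex in its exterior (i.e. there are two vertices
off the curve lying in different connected components of its complement). -/
def Separated : Prop :=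
  ∀ i j : Fin G.m, i ≠ j → G.Parallel i j →
    (G.edgeCurve i ∩ G.edgeCurve j
        = {G.vpos (G.ends i).1, G.vpos (G.ends i).2}) ∧
    ∃ u w : Fin G.n,
      G.vpos u ∉ G.edgeCurve i ∪ G.edgeCurve j ∧
      G.vpos w ∉ G.edgeCurve i ∪ G.edgeCurve j ∧
      G.vpos w ∉ connectedComponentIn (G.edgeCurve i ∪ G.edgeCurve j)ᶜ (G.vpos u)

/-- A topological multigraph is locally starlike if no two adjacent edges cross. -/
def LocallyStarlike : Prop :=
  ∀ i j : Fin G.m, G.Adjacent i j → ¬G.Crosses i j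

/-- Edge multiplicity at most `k`: no `k+1` pairwise parallel edges. -/
def MultiplicityAtMost (k : ℕ) : Prop :=
  ∀ S : Finset (Fin G.m), (∀ i ∈ S, ∀ j ∈ S, G.Parallel i j) → S.card ≤ k

/-- The multigraph has no parallel edges (it is a topological graph). -/
def Simple : Prop := ∀ i j : Fin G.m, G.Parallel i j → i = j

/-- The multigraph contains a cycle of length `k`: `k` distinct vertices cyclically
joined by edges. -/
def HasCycleOfLength (k : ℕ) : Prop :=
  ∃ v : ZMod k → Fin G.n, Function.Injective v ∧
    ∀ a : ZMod k, ∃ i : Fin G.m,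
      G.ends i = (v a, v (a + 1)) ∨ G.ends i = (v (a + 1), v a)

/-- The sub-multigraph of `G` induced by the vertices in `A`, keeping exactly those
edges of `S` whose endpoints both lie in `A`, with the inherited drawing. -/
def inducedSub (A : Finset (Fin G.n)) (S : Finset (Fin G.m)) : TopMultigraph :=
  let T : Finset (Fin G.m) := S.filter fun i => (G.ends i).1 ∈ A ∧ (G.ends i).2 ∈ A
  let ev : Fin A.card ≃o {x // x ∈ A} := A.orderIsoOfFin rfl
  let ee : Fin T.card ≃o {x // x ∈ T} := T.orderIsoOfFin rfl
  have hend : ∀ i : Fin T.card, (G.ends (ee i).1).1 ∈ A ∧ (G.ends (ee i).1).2 ∈ A :=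
    fun i => (Finset.mem_filter.mp (ee i).2).2
  have heinj : ∀ i j : Fin T.card, (ee i).1 = (ee j).1 → i = j :=
    fun i j h => ee.injective (Subtype.ext h)
  { n := A.card
    m := T.card
    vpos := fun v => G.vpos (ev v).1
    vinj := fun a b h => ev.injective (Subtype.ext (G.vinj h))
    ends := fun i => (ev.symm ⟨(G.ends (ee i).1).1, (hend i).1⟩,
                      ev.symm ⟨(G.ends (ee i).1).2, (hend i).2⟩)
    noLoop := by
      intro i h
      have h2 := congrArg (fun x => ((ev x : {x // x ∈ A}) : Fin G.n)) h
      simp only [OrderIso.apply_symm_apply] at h2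
      exact G.noLoop (ee i).1 h2
    arc := fun i => G.arc (ee i).1
    arc_cont := fun i => G.arc_cont (ee i).1
    arc_inj := fun i => G.arc_inj (ee i).1
    arc_src := by
      intro i
      show G.arc (ee i).1 0
          = G.vpos (ev (ev.symm ⟨(G.ends (ee i).1).1, (hend i).1⟩)).1
      rw [OrderIso.apply_symm_apply]
      exact G.arc_src (ee i).1
    arc_tgt := by
      intro i
      show G.arc (ee i).1 1
          = G.vpos (ev (ev.symm ⟨(G.ends (ee i).1).2, (hend i).2⟩)).1
      rw [OrderIso.apply_symm_apply]
      exact G.arc_tgt (ee i).1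
    no_vertex_interior := fun i t ht v => G.no_vertex_interior (ee i).1 t ht (ev v).1
    finite_intersections := fun i j hij =>
      G.finite_intersections (ee i).1 (ee j).1 fun h => hij (heinj i j h)
    no_triple := fun i j k hij hjk hik p hp =>
      G.no_triple (ee i).1 (ee j).1 (ee k).1
        (fun h => hij (heinj _ _ h)) (fun h => hjk (heinj _ _ h))
        (fun h => hik (heinj _ _ h)) p hp }

/-- The multigraph obtained from `G` by removing all edges outside `S`
(keeping all vertices), with the inherited drawing. -/
def restrict (S : Finset (Fin G.m)) : TopMultigraph :=
  G.inducedSub Finset.univ S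

end TopMultigraph

/-- A drawing style: a predicate on topological multigraphs (drawings). -/
abbrev DrawingStyle := TopMultigraph → Prop

/-- A drawing style is monotone if removing edges retains the drawing style. -/
def MonotoneStyle (D : DrawingStyle) : Prop :=
  ∀ G : TopMultigraph, D G → ∀ S : Finset (Fin G.m), D (G.restrict S)

/-- `G'` is obtained from `G` by a vertex split: a vertex `v` of `G` is replaced by two
vertices (all other vertices keep their positions), each edge formerly incident to `v` is
attached to one of the two new vertices (edges and their endpoints correspond via the
bijection `σ` and the vertex identification `ψ`), and no new crossing is created. -/
def IsVertexSplit (G G' : TopMultigraph) : Prop :=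
  G'.n = G.n + 1 ∧ G'.m = G.m ∧
  ∃ (ψ : Fin G'.n → Fin G.n) (σ : Fin G'.m ≃ Fin G.m) (v : Fin G.n),
    Function.Surjective ψ ∧
    (∃ w₁ w₂ : Fin G'.n, w₁ ≠ w₂ ∧ ψ w₁ = v ∧ ψ w₂ = v) ∧
    (∀ w : Fin G'.n, ψ w ≠ v → G'.vpos w = G.vpos (ψ w)) ∧
    (∀ i : Fin G'.m, G.ends (σ i) = (ψ (G'.ends i).1, ψ (G'.ends i).2)) ∧
    (∀ i j : Fin G'.m, G'.Crosses i j → G.Crosses (σ i) (σ j)) ∧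
    G'.cr ≤ G.cr

/-- A drawing style is split-compatible if performing vertex splits retains the style. -/
def SplitCompatible (D : DrawingStyle) : Prop :=
  ∀ G G' : TopMultigraph, D G → IsVertexSplit G G' → D G'

/-- `IsVertexSplitSeq k G G'` : `G'` is obtained from `G` by `k` successive vertex splits. -/
def IsVertexSplitSeq : ℕ → TopMultigraph → TopMultigraph → Prop
  | 0 => fun G G' => G' = G
  | k + 1 => fun G G' => ∃ H : TopMultigraph, IsVertexSplit G H ∧ IsVertexSplitSeq k H G'

/-- The `D`-bisection width of a multigraph `G` in drawing style `D`: the smallest number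
of edges whose removal splits `G` into two multigraphs `G₁`, `G₂` in drawing style `D`
(with their inherited drawings) with no edge connecting them, each containing at least
`n/5` of the vertices. -/
noncomputable def bisectionWidth (D : DrawingStyle) (G : TopMultigraph) : ℕ :=
  sInf {k : ℕ | ∃ R : Finset (Fin G.m), R.card = k ∧
    ∃ A : Finset (Fin G.n),
      G.n ≤ 5 * A.card ∧ G.n ≤ 5 * Aᶜ.card ∧
      (∀ i : Fin G.m, i ∉ R → ((G.ends i).1 ∈ A ↔ (G.ends i).2 ∈ A)) ∧
      D (G.inducedSub A Rᶜ) ∧ D (G.inducedSub Aᶜ Rᶜ)}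


/-!
Every crossing point lies in the interiors of two distinct edges, and each of the `e²`
ordered pairs of edges contributes at most `C` points, so `cr(G) ≤ C e² = O(n^{2b})`.
For `x = 1/(b-1)` the exponents satisfy `b (x + 2) - (x + 1) = 2b`, so substituting
`e = Θ(n^b)` into `e^{x+2}/n^{x+1}` gives `Θ(n^{2b})`.
-/

namespace TopMultigraph

theorem crossingSet_eq_iUnion (G : TopMultigraph) :
    G.crossingSet = ⋃ p : Fin G.m × Fin G.m,
      {q | p.1 ≠ p.2 ∧ q ∈ G.edgeInterior p.1 ∧ q ∈ G.edgeInterior p.2} := by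
  ext q
  simp [crossingSet]

theorem cr_le_mul_sq_of_ncard_inter_le (G : TopMultigraph) {C : ℕ}
    (hC : ∀ i j : Fin G.m, i ≠ j → (G.edgeInterior i ∩ G.edgeInterior j).ncard ≤ C) :
    G.cr ≤ C * G.m ^ 2 := by
  have hpair : ∀ p : Fin G.m × Fin G.m,
      {q | p.1 ≠ p.2 ∧ q ∈ G.edgeInterior p.1 ∧ q ∈ G.edgeInterior p.2}.ncard ≤ C := by
    rintro ⟨i, j⟩
    by_cases hij : i = j
    · simp [hij]
    · simpa [hij] using hC i j hij
  calc G.cr ≤ ∑ p : Fin G.m × Fin G.m,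
        {q | p.1 ≠ p.2 ∧ q ∈ G.edgeInterior p.1 ∧ q ∈ G.edgeInterior p.2}.ncard := by
        rw [cr, crossingSet_eq_iUnion]
        exact Set.ncard_iUnion_le_of_fintype _
    _ ≤ ∑ _p : Fin G.m × Fin G.m, C := Finset.sum_le_sum fun p _ => hpair p
    _ = C * G.m ^ 2 := by simp [sq, mul_comm]

end TopMultigraph

theorem mul_rpow_add_two_div_rpow_add_one {n b x c : ℝ} (hn : 0 < n) (hc : 0 ≤ c)
    (hx : (b - 1) * x = 1) :
    (c * n ^ b) ^ (x + 2) / n ^ (x + 1) = c ^ (x + 2) * n ^ (2 * b) := by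
  rw [Real.mul_rpow hc (by positivity), ← Real.rpow_mul hn.le, mul_div_assoc,
    ← Real.rpow_sub hn]
  congr 2
  linear_combination hx

theorem generalized_crossing_lemma_tight_general
    (D : DrawingStyle) (b : ℝ) (hb : 1 < b) (C : ℕ) (c1 c2 : ℝ)
    (hc1 : 0 < c1) (hc2 : 0 < c2) :
    ∃ c3 c4 c5 : ℝ, 0 < c3 ∧ 0 < c4 ∧ 0 < c5 ∧
      ∀ G : TopMultigraph, D G → 1 ≤ G.n →
        c1 * (G.n : ℝ) ^ b ≤ (G.m : ℝ) → (G.m : ℝ) ≤ c2 * (G.n : ℝ) ^ b →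
        (∀ i j : Fin G.m, i ≠ j → (G.edgeInterior i ∩ G.edgeInterior j).ncard ≤ C) →
        (G.cr : ℝ) ≤ c3 * (G.n : ℝ) ^ (2 * b) ∧
        c4 * (G.n : ℝ) ^ (2 * b)
          ≤ (G.m : ℝ) ^ (1 / (b - 1) + 2) / (G.n : ℝ) ^ (1 / (b - 1) + 1) ∧
        (G.m : ℝ) ^ (1 / (b - 1) + 2) / (G.n : ℝ) ^ (1 / (b - 1) + 1)
          ≤ c5 * (G.n : ℝ) ^ (2 * b) := by
  set x := 1 / (b - 1)
  have hx : (b - 1) * x = 1 := mul_one_div_cancel (sub_ne_zero.mpr hb.ne')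
  refine ⟨(C + 1) * c2 ^ 2, c1 ^ (x + 2), c2 ^ (x + 2), by positivity, by positivity,
    by positivity, fun G _ hn hlow hup hC => ?_⟩
  have hn0 : (0 : ℝ) < G.n := by exact_mod_cast hn
  refine ⟨?_, ?_, ?_⟩
  · have hnb : (G.n : ℝ) ^ (2 * b) = ((G.n : ℝ) ^ b) ^ 2 := by
      rw [mul_comm, Real.rpow_mul hn0.le, Real.rpow_two]
    calc (G.cr : ℝ) ≤ C * (G.m : ℝ) ^ 2 := by
          exact_mod_cast G.cr_le_mul_sq_of_ncard_inter_le hC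
      _ ≤ (C + 1) * (c2 * (G.n : ℝ) ^ b) ^ 2 := by gcongr; linarith
      _ = (C + 1) * c2 ^ 2 * (G.n : ℝ) ^ (2 * b) := by rw [hnb]; ring
  · rw [← mul_rpow_add_two_div_rpow_add_one hn0 hc1.le hx]
    gcongr
  · rw [← mul_rpow_add_two_div_rpow_add_one hn0 hc2.le hx]
    gcongr

/-- **Tightness of the Generalized Crossing Lemma.**
Let `D` be a drawing style, `b > 1` and `x = 1/(b−1)`.  Suppose that for arbitrarily
large `n` there exist `n`-vertex multigraphs in drawing style `D` with `e = Θ(n^b)` edges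
(say `c1·n^b ≤ e ≤ c2·n^b`) in which any two edges cross at most `C` times.  Then for all
such multigraphs `cr(G) = O(n^{2b})` while `e^{x+2}/n^{x+1} = Θ(n^{2b})`; hence the lower
bound `cr(G) ≥ α·e^{x+2}/n^{x+1}` of the Generalized Crossing Lemma is asymptotically
tight for `D`. -/
theorem generalized_crossing_lemma_tight
    (D : DrawingStyle) (b : ℝ) (hb : 1 < b) (C : ℕ) (c1 c2 : ℝ)
    (hc1 : 0 < c1) (hc2 : 0 < c2)
    (hexist : ∀ N : ℕ, ∃ G : TopMultigraph, D G ∧ N ≤ G.n ∧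
      c1 * (G.n : ℝ) ^ b ≤ (G.m : ℝ) ∧ (G.m : ℝ) ≤ c2 * (G.n : ℝ) ^ b ∧
      (∀ i j : Fin G.m, i ≠ j → (G.edgeInterior i ∩ G.edgeInterior j).ncard ≤ C)) :
    ∃ c3 c4 c5 : ℝ, 0 < c3 ∧ 0 < c4 ∧ 0 < c5 ∧
      ∀ G : TopMultigraph, D G → 1 ≤ G.n →
        c1 * (G.n : ℝ) ^ b ≤ (G.m : ℝ) → (G.m : ℝ) ≤ c2 * (G.n : ℝ) ^ b →
        (∀ i j : Fin G.m, i ≠ j → (G.edgeInterior i ∩ G.edgeInterior j).ncard ≤ C) →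
        (G.cr : ℝ) ≤ c3 * (G.n : ℝ) ^ (2 * b) ∧
        c4 * (G.n : ℝ) ^ (2 * b)
          ≤ (G.m : ℝ) ^ (1 / (b - 1) + 2) / (G.n : ℝ) ^ (1 / (b - 1) + 1) ∧
        (G.m : ℝ) ^ (1 / (b - 1) + 2) / (G.n : ℝ) ^ (1 / (b - 1) + 1)
          ≤ c5 * (G.n : ℝ) ^ (2 * b) :=
  generalized_crossing_lemma_tight_general D b hb C c1 c2 hc1 hc2
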